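/- Let Ω ⊆ ℝⁿ (n ≥ 2) be open, let p : closure(Ω) → [1,∞) be log-Hölder continuous with p⁺ < n, let r : Ω → [0,∞) be bounded, and let a ∈ L^∞(Ω) with a ≥ 0. Define Φ and Ψ as in the context and assume the embedding hypothesis with constant c₁. Then there is a constant C > 0, depending only on n and c₁, such that for every x ∈ closure(Ω) and every R ∈ (0,1] with |A_R| ≤ 1: R − R̃ ≤ C (1+‖a‖_∞)^{1/p⁻} 2^{1/p⁻ − 1/n + 1} |A_R|^{1/p⁺_{A_R} − 1/p⁻_{A_R} + 1/n} (log(e + 1/|A_R|))^{r⁺_{A_R}}, where A_R := B_R(x) ∩ Ω and R̃ ∈ (0,R] denotes the smallest radius with |A_{R̃}| = |A_R|/2. -/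

import Mathlib

open MeasureTheory Set
open scoped ENNReal

/-- The function `Φ(x,t) = t^{p(x)} + a(x) t^{p(x)} (log(e+t))^{r(x)}`. -/
noncomputable def Phi2 {n : ℕ} (p r a : EuclideanSpace ℝ (Fin n) → ℝ)
    (x : EuclideanSpace ℝ (Fin n)) (t : ℝ) : ℝ :=
  t ^ p x + a x * t ^ p x * (Real.log (Real.exp 1 + t)) ^ r x

/-- The Sobolev conjugate exponent `p*(x) = (1/p(x) − 1/n)⁻¹`. -/
noncomputable def pStar (n : ℕ) (p : EuclideanSpace ℝ (Fin n) → ℝ)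
    (x : EuclideanSpace ℝ (Fin n)) : ℝ :=
  (1 / p x - 1 / (n : ℝ))⁻¹

/-- The function
`Ψ(x,t) = t^{p*(x)} + a(x)^{p*(x)/p(x)} t^{p*(x)}
  (log(e + t/a(x)^{(p(x)−1)/p(x)}))^{r(x)p*(x)/p(x)}`
(with the second term equal to `0` when `a(x) = 0`, as `0^{p*/p} = 0`). -/
noncomputable def Psi {n : ℕ} (p r a : EuclideanSpace ℝ (Fin n) → ℝ)
    (x : EuclideanSpace ℝ (Fin n)) (t : ℝ) : ℝ :=
  t ^ pStar n p x + a x ^ (pStar n p x / p x) * t ^ pStar n p x *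
    (Real.log (Real.exp 1 + t / a x ^ ((p x - 1) / p x))) ^ (r x * pStar n p x / p x)

/-- The Luxemburg (quasi-)norm `‖u‖_{L^Φ(Ω)} = inf{λ > 0 : ∫_Ω Φ(x,|u(x)|/λ) dx ≤ 1}`,
valued in `ℝ≥0∞`, with `inf ∅ = ∞`. -/
noncomputable def luxNorm {n : ℕ} (Ω : Set (EuclideanSpace ℝ (Fin n)))
    (Φ : EuclideanSpace ℝ (Fin n) → ℝ → ℝ)
    (u : EuclideanSpace ℝ (Fin n) → ℝ) : ℝ≥0∞ :=
  sInf ((fun l : ℝ => ENNReal.ofReal l) ''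
    {l : ℝ | 0 < l ∧ (∫⁻ x in Ω, ENNReal.ofReal (Φ x (|u x| / l))) ≤ 1})

/-!
Test the embedding with a smooth radial cutoff `u` that equals `1` on `B_{R̃}(x)`, vanishes
outside `B_R(x)` and has `|∇u| ≤ K / (R - R̃)`. If `Φ(z, t) ≤ 1 / |A_R|` for `z ∈ A_R` and
`t ≤ s`, then `‖u‖_Φ ≤ 1 / s` and `‖∇u‖_Φ ≤ K / ((R - R̃) s)`; such an `s` is `T^{-e}` with
`T = (1 + ‖a‖_∞) log(e + 1/|A_R|)^{r⁺} |A_R|` and `e = 1/p⁻` or `1/p⁺` according as `T ≥ 1` or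
`T < 1`. On `A_{R̃}`, which has measure `|A_R| / 2`, we have `u = 1` and
`Ψ(z, t) ≥ t^{p*(z)} ≥ t^{(1/p⁻ - 1/n)⁻¹}` for `t ≥ 1`, so `‖u‖_Ψ ≥ (|A_R|/2)^{1/p⁻ - 1/n}`.
The embedding inequality then bounds `R - R̃`, and `|A_R| ≤ 1` turns `T^e (|A_R|/2)^{1/n - 1/p⁻}`
into the stated power of `|A_R|`.
-/

open Function Metric Topology
open scoped NNReal

theorem exists_lipschitzWith_smoothTransition :
    ∃ K : ℝ≥0, 0 < K ∧ LipschitzWith K Real.smoothTransition := by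
  obtain ⟨K, hK⟩ := (Real.smoothTransition.contDiff (n := 1)).contDiffOn.exists_lipschitzOnWith
    one_ne_zero (convex_Icc (0 : ℝ) 1) isCompact_Icc
  -- `smoothTransition` factors through the projection onto `[0, 1]`
  have hK' : LipschitzWith (K * 1) Real.smoothTransition := by
    convert hK.to_restrict.comp (LipschitzWith.projIcc zero_le_one) using 1
    funext t
    simp
  exact ⟨K + 1, by positivity, hK'.weaken (by simp)⟩

section RadialCutoff

variable {X : Type*} [PseudoMetricSpace X] {x y : X} {R δ : ℝ}

noncomputable def radialCutoff (x : X) (R δ : ℝ) (y : X) : ℝ :=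
  Real.smoothTransition ((R - dist y x) / δ)

theorem radialCutoff_nonneg : 0 ≤ radialCutoff x R δ y := Real.smoothTransition.nonneg _

theorem radialCutoff_le_one : radialCutoff x R δ y ≤ 1 := Real.smoothTransition.le_one _

theorem radialCutoff_eq_one (hδ : 0 < δ) (hy : dist y x ≤ R - δ) : radialCutoff x R δ y = 1 :=
  Real.smoothTransition.one_of_one_le <| (le_div_iff₀ hδ).2 (by linarith)

theorem radialCutoff_eq_zero (hδ : 0 ≤ δ) (hy : R ≤ dist y x) : radialCutoff x R δ y = 0 :=
  Real.smoothTransition.zero_of_nonpos <| div_nonpos_of_nonpos_of_nonneg (by linarith) hδ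

theorem support_radialCutoff_subset (hδ : 0 ≤ δ) : support (radialCutoff x R δ) ⊆ ball x R :=
  fun _ hy => mem_ball.2 <| not_le.1 fun h => hy (radialCutoff_eq_zero hδ h)

theorem tsupport_radialCutoff_subset (hδ : 0 ≤ δ) :
    tsupport (radialCutoff x R δ) ⊆ closedBall x R :=
  (closure_mono (support_radialCutoff_subset hδ)).trans closure_ball_subset_closedBall

theorem hasCompactSupport_radialCutoff [ProperSpace X] (hδ : 0 ≤ δ) :
    HasCompactSupport (radialCutoff x R δ) :=
  (isCompact_closedBall x R).of_isClosed_subset (isClosed_tsupport _)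
    (tsupport_radialCutoff_subset hδ)

theorem contDiff_radialCutoff {E : Type*} [NormedAddCommGroup E] [InnerProductSpace ℝ E] {x : E}
    {k : ℕ∞} (hδ : 0 < δ) (hδR : δ < R) :
    ContDiff ℝ k (radialCutoff x R δ) := by
  refine contDiff_iff_contDiffAt.2 fun y => ?_
  rcases lt_or_ge (dist y x) (R - δ) with hy | hy
  · -- near the centre, where the norm is not smooth, the cutoff is constant
    have hconst : radialCutoff x R δ =ᶠ[𝓝 y] fun _ => 1 := by
      filter_upwards [isOpen_lt (continuous_id.dist continuous_const) continuous_const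
        |>.mem_nhds hy] with z hz
      exact radialCutoff_eq_one hδ hz.le
    exact contDiffAt_const.congr_of_eventuallyEq hconst
  · have hyx : y - x ≠ 0 := sub_ne_zero.2 fun h => by simp [h] at hy; linarith
    have hnorm : ContDiffAt ℝ k (fun z : E => ‖z - x‖) y :=
      (contDiffAt_norm ℝ hyx).comp y (contDiffAt_id.sub contDiffAt_const)
    change ContDiffAt ℝ k (fun z => Real.smoothTransition ((R - dist z x) / δ)) y
    simp only [dist_eq_norm]
    exact Real.smoothTransition.contDiffAt.comp y ((contDiffAt_const.sub hnorm).div_const δ)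

theorem lipschitzWith_radialCutoff {K : ℝ≥0} (hK : LipschitzWith K Real.smoothTransition)
    (hδ : 0 < δ) : LipschitzWith (K * δ.toNNReal⁻¹) (radialCutoff x R δ) := by
  have haff : LipschitzWith δ.toNNReal⁻¹ fun y : X => (R - dist y x) / δ := by
    refine LipschitzWith.of_dist_le_mul fun y z => ?_
    rw [Real.dist_eq, NNReal.coe_inv, Real.coe_toNNReal _ hδ.le, ← sub_div, abs_div,
      abs_of_pos hδ, div_eq_inv_mul, sub_sub_sub_cancel_left]
    exact mul_le_mul_of_nonneg_left ((abs_dist_sub_le z y x).trans_eq (dist_comm z y))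
      (inv_nonneg.2 hδ.le)
  exact hK.comp haff

theorem norm_fderiv_radialCutoff_le {E : Type*} [NormedAddCommGroup E] [NormedSpace ℝ E] {x : E}
    {K : ℝ≥0} (hK : LipschitzWith K Real.smoothTransition)
    (hδ : 0 < δ) (y : E) : ‖fderiv ℝ (radialCutoff x R δ) y‖ ≤ K / δ := by
  simpa [Real.coe_toNNReal _ hδ.le, div_eq_mul_inv] using
    norm_fderiv_le_of_lipschitz ℝ (lipschitzWith_radialCutoff (x := x) (R := R) hK hδ) (x₀ := y)

end RadialCutoff

section LuxemburgNorm

variable {n : ℕ} {Ω B : Set (EuclideanSpace ℝ (Fin n))} {Φ : EuclideanSpace ℝ (Fin n) → ℝ → ℝ}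
  {u : EuclideanSpace ℝ (Fin n) → ℝ}

theorem luxNorm_le_ofReal {l : ℝ} (hl : 0 < l)
    (h : ∫⁻ x in Ω, ENNReal.ofReal (Φ x (|u x| / l)) ≤ 1) :
    luxNorm Ω Φ u ≤ ENNReal.ofReal l :=
  sInf_le ⟨l, ⟨hl, h⟩, rfl⟩

theorem le_luxNorm {c : ℝ≥0∞}
    (h : ∀ l : ℝ, 0 < l → ∫⁻ x in Ω, ENNReal.ofReal (Φ x (|u x| / l)) ≤ 1 →
      c ≤ ENNReal.ofReal l) :
    c ≤ luxNorm Ω Φ u :=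
  le_sInf <| by rintro _ ⟨l, ⟨hl, hint⟩, rfl⟩; exact h l hl hint

theorem luxNorm_le_div_of_abs_le (hΩ : MeasurableSet Ω) (hB : MeasurableSet B) {G s M : ℝ}
    (hG : 0 < G) (hs : 0 < s) (hu : ∀ y, |u y| ≤ G)
    (hu0 : ∀ᵐ y ∂volume.restrict Ω, y ∉ B → u y = 0) (hΦ0 : ∀ z ∈ Ω, Φ z 0 = 0)
    (hΦ : ∀ z ∈ B ∩ Ω, ∀ t ∈ Icc 0 s, Φ z t ≤ M) (hM : ENNReal.ofReal M * volume (B ∩ Ω) ≤ 1) :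
    luxNorm Ω Φ u ≤ ENNReal.ofReal (G / s) := by
  refine luxNorm_le_ofReal (by positivity) ?_
  have hpt : ∀ᵐ y ∂volume.restrict Ω,
      ENNReal.ofReal (Φ y (|u y| / (G / s))) ≤ B.indicator (fun _ => ENNReal.ofReal M) y := by
    filter_upwards [hu0, ae_restrict_mem hΩ] with y hy0 hyΩ
    by_cases hyB : y ∈ B
    · rw [indicator_of_mem hyB]
      refine ENNReal.ofReal_le_ofReal (hΦ y ⟨hyB, hyΩ⟩ _ ⟨by positivity, ?_⟩)
      rw [div_div_eq_mul_div, div_le_iff₀ hG]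
      exact (mul_le_mul_of_nonneg_right (hu y) hs.le).trans_eq (mul_comm G s)
    · simp [hy0 hyB, hΦ0 y hyΩ]
  calc ∫⁻ y in Ω, ENNReal.ofReal (Φ y (|u y| / (G / s)))
      ≤ ∫⁻ y in Ω, B.indicator (fun _ => ENNReal.ofReal M) y := lintegral_mono_ae hpt
    _ = ENNReal.ofReal M * volume (B ∩ Ω) := by
      rw [lintegral_indicator hB, setLIntegral_const, Measure.restrict_apply hB]
    _ ≤ 1 := hM

theorem rpow_inv_le_luxNorm {q : ℝ} (hq : 0 < q) (hB : MeasurableSet B) (hBΩ : B ⊆ Ω)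
    (hB1 : volume B ≤ 1) (hu : ∀ y ∈ B, |u y| = 1) (hΦ : ∀ y ∈ B, ∀ t, 1 ≤ t → t ^ q ≤ Φ y t) :
    ENNReal.ofReal ((volume B).toReal ^ q⁻¹) ≤ luxNorm Ω Φ u := by
  set w := (volume B).toReal
  have hw0 : 0 ≤ w := ENNReal.toReal_nonneg
  refine le_luxNorm fun l hl hint => ENNReal.ofReal_le_ofReal ?_
  rcases le_or_gt 1 l with hl1 | hl1
  · exact (Real.rpow_le_one hw0 (ENNReal.toReal_le_of_le_ofReal zero_le_one (by simpa using hB1))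
      (inv_nonneg.2 hq.le)).trans hl1
  have hmass : ENNReal.ofReal ((1 / l) ^ q) * volume B ≤ 1 :=
    calc ENNReal.ofReal ((1 / l) ^ q) * volume B
        = ∫⁻ _ in B, ENNReal.ofReal ((1 / l) ^ q) := (setLIntegral_const _ _).symm
      _ ≤ ∫⁻ y in B, ENNReal.ofReal (Φ y (|u y| / l)) := by
        refine lintegral_mono_ae <| (ae_restrict_mem hB).mono fun y hy => ?_
        rw [hu y hy]
        exact ENNReal.ofReal_le_ofReal (hΦ y hy _ (by rw [le_div_iff₀ hl]; linarith))
      _ ≤ ∫⁻ y in Ω, ENNReal.ofReal (Φ y (|u y| / l)) := lintegral_mono_set hBΩ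
      _ ≤ 1 := hint
  have hwl : w ≤ l ^ q := by
    have hfin : volume B ≠ ⊤ := ne_top_of_le_ne_top ENNReal.one_ne_top hB1
    rw [← ENNReal.ofReal_toReal hfin, ← ENNReal.ofReal_mul (by positivity),
      ENNReal.ofReal_le_one, Real.div_rpow zero_le_one hl.le, Real.one_rpow,
      div_mul_eq_mul_div, one_mul, div_le_one (by positivity)] at hmass
    exact hmass
  calc w ^ q⁻¹ ≤ (l ^ q) ^ q⁻¹ := Real.rpow_le_rpow hw0 hwl (inv_nonneg.2 hq.le)
    _ = l := Real.rpow_rpow_inv hl.le hq.ne'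

end LuxemburgNorm

section Pointwise

variable {n : ℕ} {p r a : EuclideanSpace ℝ (Fin n) → ℝ} {z : EuclideanSpace ℝ (Fin n)} {t : ℝ}

theorem one_le_log_exp_one_add (ht : 0 ≤ t) : 1 ≤ Real.log (Real.exp 1 + t) := by
  rw [Real.le_log_iff_exp_le (by positivity)]
  linarith

theorem Phi2_zero (hp : p z ≠ 0) : Phi2 p r a z 0 = 0 := by
  simp [Phi2, Real.zero_rpow hp]

theorem Phi2_le_mul_rpow {S ρ τ : ℝ} (ha : a z ∈ Icc 0 S) (hr : r z ∈ Icc 0 ρ)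
    (ht : t ∈ Icc 0 τ) :
    Phi2 p r a z t ≤ (1 + S) * Real.log (Real.exp 1 + τ) ^ ρ * t ^ p z := by
  obtain ⟨ht0, htτ⟩ := ht
  have hlog : 1 ≤ Real.log (Real.exp 1 + t) := one_le_log_exp_one_add ht0
  have hLρ : Real.log (Real.exp 1 + t) ^ r z ≤ Real.log (Real.exp 1 + τ) ^ ρ :=
    (Real.rpow_le_rpow (by linarith) (Real.log_le_log (by positivity) (by linarith)) hr.1).trans
      (Real.rpow_le_rpow_of_exponent_le (hlog.trans (Real.log_le_log (by positivity)
        (by linarith))) hr.2)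
  have hL1 : 1 ≤ Real.log (Real.exp 1 + τ) ^ ρ :=
    Real.one_le_rpow (one_le_log_exp_one_add (ht0.trans htτ)) (hr.1.trans hr.2)
  have htp : 0 ≤ t ^ p z := Real.rpow_nonneg ht0 _
  have hS : 0 ≤ S := ha.1.trans ha.2
  calc Phi2 p r a z t = t ^ p z * (1 + a z * Real.log (Real.exp 1 + t) ^ r z) := by
        rw [Phi2]; ring
    _ ≤ t ^ p z * (1 * Real.log (Real.exp 1 + τ) ^ ρ + S * Real.log (Real.exp 1 + τ) ^ ρ) := by
        gcongr
        · linarith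
        · exact ha.2
    _ = (1 + S) * Real.log (Real.exp 1 + τ) ^ ρ * t ^ p z := by ring

theorem Phi2_le_inv_of_rpow_le {S ρ m : ℝ} (hm : 0 < m) (hm1 : m ≤ 1) (hp : 1 ≤ p z)
    (ha : a z ∈ Icc 0 S) (hr : r z ∈ Icc 0 ρ) (ht : 0 ≤ t)
    (htp : t ^ p z ≤ ((1 + S) * Real.log (Real.exp 1 + 1 / m) ^ ρ * m)⁻¹) :
    Phi2 p r a z t ≤ m⁻¹ := by
  set c := (1 + S) * Real.log (Real.exp 1 + 1 / m) ^ ρ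
  have hc : 1 ≤ c :=
    one_le_mul_of_one_le_of_one_le (by linarith [ha.1.trans ha.2])
      (Real.one_le_rpow (one_le_log_exp_one_add (by positivity)) (hr.1.trans hr.2))
  have htm : t ≤ 1 / m := by
    rcases le_or_gt t 1 with h1 | h1
    · exact h1.trans (one_le_one_div hm hm1)
    · refine (Real.self_le_rpow_of_one_le h1.le hp).trans (htp.trans ?_)
      exact (inv_anti₀ hm (le_mul_of_one_le_left hm.le hc)).trans_eq (one_div m).symm
  calc Phi2 p r a z t ≤ c * t ^ p z := Phi2_le_mul_rpow ha hr ⟨ht, htm⟩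
    _ ≤ c * (c * m)⁻¹ := by gcongr
    _ = m⁻¹ := by rw [mul_inv, ← mul_assoc, mul_inv_cancel₀ (by positivity), one_mul]

theorem rpow_pStar_le_Psi (ha : 0 ≤ a z) (ht : 0 ≤ t) : t ^ pStar n p z ≤ Psi p r a z t := by
  have hlog : 0 ≤ Real.log (Real.exp 1 + t / a z ^ ((p z - 1) / p z)) :=
    zero_le_one.trans (one_le_log_exp_one_add (div_nonneg ht (Real.rpow_nonneg ha _)))
  rw [Psi, le_add_iff_nonneg_right]
  positivity

theorem inv_sub_le_pStar {pmin : ℝ} (hpmin : 0 < pmin) (hpz : pmin ≤ p z) (hpn : p z < n) :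
    (1 / pmin - 1 / n)⁻¹ ≤ pStar n p z :=
  inv_anti₀ (sub_pos.2 (one_div_lt_one_div_of_lt (hpmin.trans_le hpz) hpn))
    (by gcongr)

end Pointwise

theorem exists_rpow_neg_rpow_le_inv {T pmin pmax : ℝ} (hT : 0 < T) (hpmin : 0 < pmin)
    (hp : pmin ≤ pmax) :
    ∃ e ∈ Icc (1 / pmax) (1 / pmin), ∀ q ∈ Icc pmin pmax, (T ^ (-e)) ^ q ≤ T⁻¹ := by
  rcases le_or_gt 1 T with hT1 | hT1
  · refine ⟨1 / pmin, ⟨one_div_le_one_div_of_le hpmin hp, le_rfl⟩, fun q hq => ?_⟩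
    rw [← Real.rpow_mul hT.le, ← Real.rpow_neg_one]
    refine Real.rpow_le_rpow_of_exponent_le hT1 ?_
    rw [neg_mul, neg_le_neg_iff, one_div_mul_eq_div, one_le_div hpmin]
    exact hq.1
  · refine ⟨1 / pmax, ⟨le_rfl, one_div_le_one_div_of_le hpmin hp⟩, fun q hq => ?_⟩
    rw [← Real.rpow_mul hT.le, ← Real.rpow_neg_one]
    refine Real.rpow_le_rpow_of_exponent_ge hT hT1.le ?_
    rw [neg_mul, neg_le_neg_iff, one_div_mul_eq_div, div_le_one (hpmin.trans_le hp)]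
    exact hq.2

theorem le_of_mul_rpow_half_le {δ c m S L ρ ν p₀ pmin pmax e : ℝ} (hc : 0 ≤ c) (hm : 0 < m)
    (hm1 : m ≤ 1) (hS : 0 ≤ S) (hL : 1 ≤ L) (hρ : 0 ≤ ρ) (hp₀ : 1 ≤ p₀) (hp₀min : p₀ ≤ pmin)
    (he : e ∈ Icc (1 / pmax) (1 / pmin))
    (h : δ * (m / 2) ^ (1 / pmin - ν) ≤ c * ((1 + S) * L ^ ρ * m) ^ e) :
    δ ≤ c * (1 + S) ^ (1 / p₀) * 2 ^ (1 / p₀ - ν + 1) * m ^ (1 / pmax - 1 / pmin + ν) *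
      L ^ ρ := by
  set β := 1 / pmin - ν
  have hmin : 1 / pmin ≤ 1 / p₀ := one_div_le_one_div_of_le (by linarith) hp₀min
  have he₀ : e ≤ 1 / p₀ := he.2.trans hmin
  have he1 : e ≤ 1 := he₀.trans ((div_le_one (by linarith)).2 hp₀)
  have hLρ : 1 ≤ L ^ ρ := Real.one_le_rpow hL hρ
  calc δ ≤ c * ((1 + S) * L ^ ρ * m) ^ e * (m / 2) ^ (-β) := by
        rw [Real.rpow_neg (by positivity), ← div_eq_mul_inv, le_div_iff₀ (by positivity)]
        exact h
    _ = c * (1 + S) ^ e * 2 ^ β * (m ^ e * m ^ (-β)) * (L ^ ρ) ^ e := by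
        rw [Real.mul_rpow (by positivity) hm.le, Real.mul_rpow (by positivity) (by positivity),
          Real.div_rpow hm.le zero_le_two, Real.rpow_neg zero_le_two, div_inv_eq_mul]
        ring
    _ ≤ c * (1 + S) ^ (1 / p₀) * 2 ^ (1 / p₀ - ν + 1) * m ^ (1 / pmax - 1 / pmin + ν) *
          L ^ ρ := by
        gcongr c * ?_ * ?_ * ?_ * ?_
        · exact Real.rpow_le_rpow_of_exponent_le (by linarith) he₀
        · exact Real.rpow_le_rpow_of_exponent_le one_le_two (by linarith)
        · rw [← Real.rpow_add hm]
          exact Real.rpow_le_rpow_of_exponent_ge hm hm1 (by linarith [he.1])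
        · exact (Real.rpow_le_rpow_of_exponent_le hLρ he1).trans_eq (Real.rpow_one _)

def LogHolderOn {α : Type*} [PseudoMetricSpace α] (f : α → ℝ) (C : ℝ) (s : Set α) : Prop :=
  ∀ x ∈ s, ∀ y ∈ s, x ≠ y → |f x - f y| ≤ C / Real.log (Real.exp 1 + 1 / dist x y)

theorem LogHolderOn.bddAbove_image {α : Type*} [PseudoMetricSpace α] {f : α → ℝ} {C : ℝ}
    {s : Set α} (hf : LogHolderOn f C s) : BddAbove (f '' s) := by
  rcases s.eq_empty_or_nonempty with rfl | ⟨y, hy⟩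
  · simp
  refine ⟨f y + |C|, forall_mem_image.2 fun x hx => ?_⟩
  rcases eq_or_ne x y with rfl | hxy
  · linarith [abs_nonneg C]
  have hlog := one_le_log_exp_one_add (one_div_nonneg.2 (dist_nonneg (x := x) (y := y)))
  have hC : C / Real.log (Real.exp 1 + 1 / dist x y) ≤ |C| :=
    div_le_of_le_mul₀ (zero_le_one.trans hlog) (abs_nonneg C)
      (by nlinarith [le_abs_self C, abs_nonneg C])
  linarith [le_abs_self (f x - f y), hf x hx y hy hxy]

section HalfMeasureRadius

variable {X : Type*} [PseudoMetricSpace X] [MeasurableSpace X] {μ : Measure X} {Ω : Set X}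
  {x : X} {R Rt : ℝ}

theorem measure_ball_inter_ne_zero_of_isLeast
    (h : IsLeast {s : ℝ | 0 < s ∧ s ≤ R ∧ μ (ball x s ∩ Ω) = μ (ball x R ∩ Ω) / 2} Rt) :
    μ (ball x R ∩ Ω) ≠ 0 := by
  intro h0
  obtain ⟨⟨hRt, hRtR, -⟩, hleast⟩ := h
  have hhalf : Rt / 2 ∈ {s : ℝ | 0 < s ∧ s ≤ R ∧ μ (ball x s ∩ Ω) = μ (ball x R ∩ Ω) / 2} :=
    ⟨by linarith, by linarith, by
      rw [h0, ENNReal.zero_div]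
      exact measure_mono_null (inter_subset_inter_left _ (ball_subset_ball (by linarith))) h0⟩
  linarith [hleast hhalf]

theorem lt_of_isLeast_measure_ball_inter
    (h : IsLeast {s : ℝ | 0 < s ∧ s ≤ R ∧ μ (ball x s ∩ Ω) = μ (ball x R ∩ Ω) / 2} Rt)
    (hfin : μ (ball x R ∩ Ω) ≠ ⊤) : Rt < R := by
  refine h.1.2.1.lt_of_ne fun hR => ?_
  have hhalf := h.1.2.2
  rw [hR] at hhalf
  exact (ENNReal.half_lt_self (measure_ball_inter_ne_zero_of_isLeast h) hfin).ne' hhalf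

end HalfMeasureRadius

section Embedding

variable {n : ℕ} {Ω : Set (EuclideanSpace ℝ (Fin n))} {p r a : EuclideanSpace ℝ (Fin n) → ℝ}
  {c₁ : ℝ}

theorem sub_mul_rpow_half_le_of_embedding (hΩ : MeasurableSet Ω) {K : ℝ≥0} (hK0 : 0 < K)
    (hK : LipschitzWith K Real.smoothTransition) {x : EuclideanSpace ℝ (Fin n)} {R Rt pmin s : ℝ}
    (hRt : 0 < Rt) (hRtR : Rt < R) (hR1 : R ≤ 1)
    (hvol : volume (ball x Rt ∩ Ω) = volume (ball x R ∩ Ω) / 2)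
    (hA1 : volume (ball x R ∩ Ω) ≤ 1) (hp1 : ∀ z ∈ Ω, 1 ≤ p z) (hpmin : 0 < pmin)
    (hpn : pmin < n) (hp : ∀ z ∈ ball x Rt ∩ Ω, pmin ≤ p z ∧ p z < n) (ha : ∀ z ∈ Ω, 0 ≤ a z)
    (hs : 0 < s) (hΦ : ∀ z ∈ ball x R ∩ Ω, ∀ t ∈ Icc 0 s,
      Phi2 p r a z t ≤ (volume (ball x R ∩ Ω)).toReal⁻¹)
    (hc₁ : 0 ≤ c₁)
    (hemb : ∀ u : EuclideanSpace ℝ (Fin n) → ℝ, ContDiff ℝ 1 u → HasCompactSupport u →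
      luxNorm Ω (Psi p r a) u ≤
        ENNReal.ofReal c₁ * (luxNorm Ω (Phi2 p r a) u +
          luxNorm Ω (Phi2 p r a) (fun x => ‖fderiv ℝ u x‖))) :
    (R - Rt) * ((volume (ball x R ∩ Ω)).toReal / 2) ^ (1 / pmin - 1 / n) ≤
      c₁ * (1 + K) / s := by
  set A := ball x R ∩ Ω
  set m := (volume A).toReal
  set δ := R - Rt
  set u := radialCutoff x R δ
  have hδ : 0 < δ := sub_pos.2 hRtR
  have hM : ENNReal.ofReal m⁻¹ * volume A ≤ 1 := by
    rcases eq_or_ne (volume A) 0 with h0 | h0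
    · simp [h0]
    rw [ENNReal.ofReal_inv_of_pos (ENNReal.toReal_pos h0 (ne_top_of_le_ne_top
      ENNReal.one_ne_top hA1)), ENNReal.ofReal_toReal (ne_top_of_le_ne_top ENNReal.one_ne_top hA1)]
    exact ENNReal.inv_mul_le_one _
  have hΦ0 : ∀ z ∈ Ω, Phi2 p r a z 0 = 0 := fun z hz => Phi2_zero (by linarith [hp1 z hz])
  have hu : luxNorm Ω (Phi2 p r a) u ≤ ENNReal.ofReal (1 / s) :=
    luxNorm_le_div_of_abs_le hΩ measurableSet_ball one_pos hs
      (fun y => (abs_of_nonneg radialCutoff_nonneg).trans_le radialCutoff_le_one)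
      (ae_of_all _ fun y hy => radialCutoff_eq_zero hδ.le (not_lt.1 (mt mem_ball.2 hy)))
      hΦ0 hΦ hM
  have hDu : luxNorm Ω (Phi2 p r a) (fun y => ‖fderiv ℝ u y‖) ≤ ENNReal.ofReal (K / δ / s) := by
    refine luxNorm_le_div_of_abs_le hΩ measurableSet_ball (by positivity) hs
      (fun y => (abs_norm _).trans_le (norm_fderiv_radialCutoff_le hK hδ y)) ?_ hΦ0 hΦ hM
    -- the gradient vanishes off the closed ball, and the sphere is null
    refine ae_restrict_of_ae ((measure_eq_zero_iff_ae_notMem.1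
      (Measure.addHaar_sphere_of_ne_zero volume x (hRt.trans hRtR).ne')).mono fun y hys hyB => ?_)
    rw [fderiv_of_notMem_tsupport ℝ fun h => hys (by
      rw [← closedBall_sdiff_ball]; exact ⟨tsupport_radialCutoff_subset hδ.le h, hyB⟩), norm_zero]
  have hq : 0 < (1 / pmin - 1 / n)⁻¹ :=
    inv_pos.2 (sub_pos.2 (one_div_lt_one_div_of_lt hpmin hpn))
  have hΨ : ENNReal.ofReal ((m / 2) ^ (1 / pmin - 1 / n)) ≤ luxNorm Ω (Psi p r a) u := by
    have h := rpow_inv_le_luxNorm (Φ := Psi p r a) (u := u) hq (measurableSet_ball.inter hΩ)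
      inter_subset_right
      (hvol ▸ ENNReal.half_le_self.trans hA1)
      (fun y hy => by
        rw [show u y = 1 from radialCutoff_eq_one hδ (by simpa [δ] using (mem_ball.1 hy.1).le),
          abs_one])
      (fun y hy t ht => (Real.rpow_le_rpow_of_exponent_le ht
        (inv_sub_le_pStar hpmin (hp y hy).1 (hp y hy).2)).trans
          (rpow_pStar_le_Psi (ha y hy.2) (by linarith)))
    rwa [inv_inv, hvol, ENNReal.toReal_div, ENNReal.toReal_ofNat] at h
  have hmain : (m / 2) ^ (1 / pmin - 1 / n) ≤ c₁ * (1 / s + K / δ / s) := by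
    refine (ENNReal.ofReal_le_ofReal_iff (by positivity)).1 ?_
    calc ENNReal.ofReal ((m / 2) ^ (1 / pmin - 1 / n))
        ≤ ENNReal.ofReal c₁ * (luxNorm Ω (Phi2 p r a) u +
            luxNorm Ω (Phi2 p r a) (fun y => ‖fderiv ℝ u y‖)) :=
          hΨ.trans (hemb u (contDiff_radialCutoff hδ (by linarith))
            (hasCompactSupport_radialCutoff hδ.le))
      _ ≤ ENNReal.ofReal c₁ * (ENNReal.ofReal (1 / s) + ENNReal.ofReal (K / δ / s)) := by
          gcongr
      _ = ENNReal.ofReal (c₁ * (1 / s + K / δ / s)) := by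
          rw [← ENNReal.ofReal_add (by positivity) (by positivity), ← ENNReal.ofReal_mul hc₁]
  calc δ * (m / 2) ^ (1 / pmin - 1 / n) ≤ δ * (c₁ * (1 / s + K / δ / s)) := by gcongr
    _ = c₁ * (δ + K) / s := by field_simp
    _ ≤ c₁ * (1 + K) / s := by gcongr; linarith

theorem sub_le_of_embedding (hΩ : MeasurableSet Ω) {K : ℝ≥0} (hK0 : 0 < K)
    (hK : LipschitzWith K Real.smoothTransition) {x : EuclideanSpace ℝ (Fin n)}
    {R Rt p₀ pmin pmax S ρ : ℝ} (hRt : 0 < Rt) (hRtR : Rt < R) (hR1 : R ≤ 1)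
    (hvol : volume (ball x Rt ∩ Ω) = volume (ball x R ∩ Ω) / 2)
    (hA0 : volume (ball x R ∩ Ω) ≠ 0) (hA1 : volume (ball x R ∩ Ω) ≤ 1)
    (hp1 : ∀ z ∈ Ω, 1 ≤ p z) (hp₀ : 1 ≤ p₀) (hp₀min : p₀ ≤ pmin)
    (hpA : ∀ z ∈ ball x R ∩ Ω, p z ∈ Icc pmin pmax) (hpmax : pmax < n)
    (ha : ∀ z ∈ Ω, a z ∈ Icc 0 S) (hr : ∀ z ∈ ball x R ∩ Ω, r z ∈ Icc 0 ρ) (hc₁ : 0 ≤ c₁)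
    (hemb : ∀ u : EuclideanSpace ℝ (Fin n) → ℝ, ContDiff ℝ 1 u → HasCompactSupport u →
      luxNorm Ω (Psi p r a) u ≤
        ENNReal.ofReal c₁ * (luxNorm Ω (Phi2 p r a) u +
          luxNorm Ω (Phi2 p r a) (fun x => ‖fderiv ℝ u x‖))) :
    R - Rt ≤ c₁ * (1 + K) * (1 + S) ^ (1 / p₀) * (2 : ℝ) ^ (1 / p₀ - 1 / (n : ℝ) + 1) *
      (volume (ball x R ∩ Ω)).toReal ^ (1 / pmax - 1 / pmin + 1 / (n : ℝ)) *
      Real.log (Real.exp 1 + 1 / (volume (ball x R ∩ Ω)).toReal) ^ ρ := by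
  set m := (volume (ball x R ∩ Ω)).toReal
  set L := Real.log (Real.exp 1 + 1 / m)
  obtain ⟨y, hy⟩ := nonempty_of_measure_ne_zero hA0
  have hm : 0 < m := ENNReal.toReal_pos hA0 (ne_top_of_le_ne_top ENNReal.one_ne_top hA1)
  have hm1 : m ≤ 1 := ENNReal.toReal_le_of_le_ofReal zero_le_one (by simpa using hA1)
  have hS : 0 ≤ S := (ha y hy.2).1.trans (ha y hy.2).2
  have hρ : 0 ≤ ρ := (hr y hy).1.trans (hr y hy).2
  have hL : 1 ≤ L := one_le_log_exp_one_add (by positivity)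
  have hpmin : 0 < pmin := by linarith
  obtain ⟨e, he, hTe⟩ := exists_rpow_neg_rpow_le_inv (T := (1 + S) * L ^ ρ * m) (by positivity)
    hpmin ((hpA y hy).1.trans (hpA y hy).2)
  have key := sub_mul_rpow_half_le_of_embedding hΩ hK0 hK hRt hRtR hR1 hvol hA1 hp1 hpmin
    (lt_of_le_of_lt ((hpA y hy).1.trans (hpA y hy).2) hpmax)
    (fun z hz => ⟨(hpA z ⟨ball_subset_ball hRtR.le hz.1, hz.2⟩).1,
      (hpA z ⟨ball_subset_ball hRtR.le hz.1, hz.2⟩).2.trans_lt hpmax⟩) (fun z hz => (ha z hz).1)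
    (Real.rpow_pos_of_pos (by positivity) (-e))
    (fun z hz t ht => Phi2_le_inv_of_rpow_le hm hm1 (hp1 z hz.2) (ha z hz.2) (hr z hz) ht.1
      ((Real.rpow_le_rpow ht.1 ht.2 (by linarith [hp1 z hz.2])).trans (hTe _ (hpA z hz))))
    hc₁ hemb
  rw [Real.rpow_neg (by positivity), div_inv_eq_mul] at key
  exact le_of_mul_rpow_half_le (by positivity) hm hm1 hS hL hρ hp₀ hp₀min he key

end Embedding

theorem stmt_15_general {n : ℕ}
    (Ω : Set (EuclideanSpace ℝ (Fin n))) (hΩo : IsOpen Ω)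
    (p r a : EuclideanSpace ℝ (Fin n) → ℝ)
    (hp1 : ∀ x ∈ closure Ω, 1 ≤ p x)
    (Clog : ℝ)
    (hpLH : ∀ x ∈ closure Ω, ∀ y ∈ closure Ω, x ≠ y →
      |p x - p y| ≤ Clog / Real.log (Real.exp 1 + 1 / dist x y))
    (hpn : sSup (p '' Ω) < n)
    (hr0 : ∀ x ∈ Ω, 0 ≤ r x) (hrB : BddAbove (r '' Ω))
    (ha0 : ∀ x ∈ Ω, 0 ≤ a x) (haB : BddAbove (a '' Ω))
    (c₁ : ℝ) (hc₁ : 0 < c₁)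
    (hemb : ∀ u : EuclideanSpace ℝ (Fin n) → ℝ,
      ContDiff ℝ 1 u → HasCompactSupport u →
      luxNorm Ω (Psi p r a) u ≤
        ENNReal.ofReal c₁ * (luxNorm Ω (Phi2 p r a) u +
          luxNorm Ω (Phi2 p r a) (fun x => ‖fderiv ℝ u x‖))) :
    ∃ C : ℝ, 0 < C ∧
      ∀ x ∈ closure Ω, ∀ R : ℝ, R ∈ Set.Ioc (0:ℝ) 1 →
        volume (Metric.ball x R ∩ Ω) ≤ 1 →
        ∀ Rt : ℝ, IsLeast {s : ℝ | 0 < s ∧ s ≤ R ∧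
            volume (Metric.ball x s ∩ Ω) = volume (Metric.ball x R ∩ Ω) / 2} Rt →
        R - Rt ≤ C * (1 + sSup (a '' Ω)) ^ (1 / sInf (p '' Ω)) *
          (2:ℝ) ^ (1 / sInf (p '' Ω) - 1 / (n:ℝ) + 1) *
          (volume (Metric.ball x R ∩ Ω)).toReal ^
            (1 / sSup (p '' (Metric.ball x R ∩ Ω)) -
              1 / sInf (p '' (Metric.ball x R ∩ Ω)) + 1 / (n:ℝ)) *
          (Real.log (Real.exp 1 + 1 / (volume (Metric.ball x R ∩ Ω)).toReal)) ^
            sSup (r '' (Metric.ball x R ∩ Ω)) := by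
  obtain ⟨K, hK0, hK⟩ := exists_lipschitzWith_smoothTransition
  refine ⟨c₁ * (1 + K), by positivity, fun x _ R hR hA1 Rt hRt => ?_⟩
  set A := ball x R ∩ Ω
  have hA0 : volume A ≠ 0 := measure_ball_inter_ne_zero_of_isLeast hRt
  obtain ⟨y, hy⟩ := nonempty_of_measure_ne_zero hA0
  have hAΩ : A ⊆ Ω := inter_subset_right
  have hpΩ_above : BddAbove (p '' Ω) :=
    (LogHolderOn.bddAbove_image hpLH).mono (image_mono subset_closure)
  have hpΩ_below : BddBelow (p '' Ω) :=
    ⟨1, forall_mem_image.2 fun z hz => hp1 z (subset_closure hz)⟩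
  exact sub_le_of_embedding hΩo.measurableSet hK0 hK hRt.1.1
    (lt_of_isLeast_measure_ball_inter hRt (ne_top_of_le_ne_top ENNReal.one_ne_top hA1)) hR.2
    hRt.1.2.2 hA0 hA1
    (fun z hz => hp1 z (subset_closure hz))
    (le_csInf ⟨_, mem_image_of_mem p (hAΩ hy)⟩
      (forall_mem_image.2 fun z hz => hp1 z (subset_closure hz)))
    (csInf_le_csInf hpΩ_below ⟨_, mem_image_of_mem p hy⟩ (image_mono hAΩ))
    (fun z hz => ⟨csInf_le (hpΩ_below.mono (image_mono hAΩ)) (mem_image_of_mem p hz),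
      le_csSup (hpΩ_above.mono (image_mono hAΩ)) (mem_image_of_mem p hz)⟩)
    ((csSup_le_csSup hpΩ_above ⟨_, mem_image_of_mem p hy⟩ (image_mono hAΩ)).trans_lt hpn)
    (fun z hz => ⟨ha0 z hz, le_csSup haB (mem_image_of_mem a hz)⟩)
    (fun z hz => ⟨hr0 z (hAΩ hz), le_csSup (hrB.mono (image_mono hAΩ)) (mem_image_of_mem r hz)⟩)
    hc₁.le hemb

/-- under the embedding hypothesis, with `r ≥ 0`, there is `C > 0`
(depending only on `n, c₁`) such that for all `x ∈ closure Ω` and `R ∈ (0,1]` with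
`|A_R| ≤ 1`, if `R̃` is the smallest radius in `(0,R]` with `|A_{R̃}| = |A_R|/2`, then
`R − R̃ ≤ C(1+‖a‖_∞)^{1/p⁻} 2^{1/p⁻−1/n+1} |A_R|^{1/p⁺_{A_R}−1/p⁻_{A_R}+1/n}
(log(e+1/|A_R|))^{r⁺_{A_R}}`. -/
theorem stmt_15 {n : ℕ} (hn : 2 ≤ n)
    (Ω : Set (EuclideanSpace ℝ (Fin n))) (hΩo : IsOpen Ω)
    (p r a : EuclideanSpace ℝ (Fin n) → ℝ)
    (hp1 : ∀ x ∈ closure Ω, 1 ≤ p x)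
    (Clog : ℝ) (hClog : 0 < Clog)
    (hpLH : ∀ x ∈ closure Ω, ∀ y ∈ closure Ω, x ≠ y →
      |p x - p y| ≤ Clog / Real.log (Real.exp 1 + 1 / dist x y))
    (hpn : sSup (p '' Ω) < n)
    (hr0 : ∀ x ∈ Ω, 0 ≤ r x) (hrB : BddAbove (r '' Ω))
    (ha0 : ∀ x ∈ Ω, 0 ≤ a x) (haB : BddAbove (a '' Ω))
    (c₁ : ℝ) (hc₁ : 0 < c₁)
    (hemb : ∀ u : EuclideanSpace ℝ (Fin n) → ℝ,
      ContDiff ℝ 1 u → HasCompactSupport u →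
      luxNorm Ω (Psi p r a) u ≤
        ENNReal.ofReal c₁ * (luxNorm Ω (Phi2 p r a) u +
          luxNorm Ω (Phi2 p r a) (fun x => ‖fderiv ℝ u x‖))) :
    ∃ C : ℝ, 0 < C ∧
      ∀ x ∈ closure Ω, ∀ R : ℝ, R ∈ Set.Ioc (0:ℝ) 1 →
        volume (Metric.ball x R ∩ Ω) ≤ 1 →
        ∀ Rt : ℝ, IsLeast {s : ℝ | 0 < s ∧ s ≤ R ∧
            volume (Metric.ball x s ∩ Ω) = volume (Metric.ball x R ∩ Ω) / 2} Rt →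
        R - Rt ≤ C * (1 + sSup (a '' Ω)) ^ (1 / sInf (p '' Ω)) *
          (2:ℝ) ^ (1 / sInf (p '' Ω) - 1 / (n:ℝ) + 1) *
          (volume (Metric.ball x R ∩ Ω)).toReal ^
            (1 / sSup (p '' (Metric.ball x R ∩ Ω)) -
              1 / sInf (p '' (Metric.ball x R ∩ Ω)) + 1 / (n:ℝ)) *
          (Real.log (Real.exp 1 + 1 / (volume (Metric.ball x R ∩ Ω)).toReal)) ^
            sSup (r '' (Metric.ball x R ∩ Ω)) :=
  stmt_15_general Ω hΩo p r a hp1 Clog hpLH hpn hr0 hrB ha0 haB c₁ hc₁ hemb
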